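/- Carathéodory's theorem for ordered factor hyperfields: let H = F/U be an ordered factor hyperfield and T ⊆ H^d. If q ∈ conv(T), then q lies in a convex combination of at most d+1 points of T. -/

import Mathlib

/-- The data of a hyperfield: a multivalued addition, multiplication,
negation, zero and one. -/
structure HyperfieldData (H : Type*) where
  hadd : H → H → Set H
  mul : H → H → H
  neg : H → H
  zero : H
  one : H

/-- The hyperfield axioms. -/
structure IsHyperfield {H : Type*} (D : HyperfieldData H) : Prop where
  hadd_nonempty : ∀ a b, (D.hadd a b).Nonempty
  hadd_comm : ∀ a b, D.hadd a b = D.hadd b a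
  hadd_assoc : ∀ a b c, (⋃ x ∈ D.hadd a b, D.hadd x c) = ⋃ y ∈ D.hadd b c, D.hadd a y
  zero_hadd : ∀ a, D.hadd D.zero a = {a}
  neg_mem : ∀ a, D.zero ∈ D.hadd a (D.neg a)
  neg_unique : ∀ a b, D.zero ∈ D.hadd a b → b = D.neg a
  reverse : ∀ a b c, a ∈ D.hadd b c ↔ c ∈ D.hadd a (D.neg b)
  mul_comm : ∀ a b, D.mul a b = D.mul b a
  mul_assoc : ∀ a b c, D.mul (D.mul a b) c = D.mul a (D.mul b c)
  one_mul : ∀ a, D.mul D.one a = a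
  mul_inv : ∀ a, a ≠ D.zero → ∃ b, D.mul a b = D.one
  zero_mul : ∀ a, D.mul D.zero a = D.zero
  distrib : ∀ a b c, D.mul a '' D.hadd b c = D.hadd (D.mul a b) (D.mul a c)
  zero_ne_one : D.zero ≠ D.one

/-- An ordering on a hyperfield: a set of positive elements closed under
hyperaddition and multiplication such that `H = P ⊔ {0} ⊔ (-P)`. -/
def IsOrdering {H : Type*} (D : HyperfieldData H) (P : Set H) : Prop :=
  (∀ a ∈ P, ∀ b ∈ P, D.hadd a b ⊆ P) ∧
  (∀ a ∈ P, ∀ b ∈ P, D.mul a b ∈ P) ∧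
  (∀ x : H, x ∈ P ∨ x = D.zero ∨ x ∈ D.neg '' P) ∧
  D.zero ∉ P ∧ D.zero ∉ D.neg '' P ∧ Disjoint P (D.neg '' P)

/-- A hyperfield homomorphism. -/
def IsHom {H1 H2 : Type*} (D1 : HyperfieldData H1) (D2 : HyperfieldData H2)
    (f : H1 → H2) : Prop :=
  (∀ a b, f '' D1.hadd a b ⊆ D2.hadd (f a) (f b)) ∧
  (∀ a b, f (D1.mul a b) = D2.mul (f a) (f b)) ∧
  f D1.one = D2.one ∧ f D1.zero = D2.zero

/-- The iterated hypersum of a finite list of elements. -/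
def listSum {H : Type*} (D : HyperfieldData H) : List H → Set H
  | [] => {D.zero}
  | x :: xs => ⋃ s ∈ listSum D xs, D.hadd x s

/-- The coordinatewise set `a ⊙ p ⊞ b ⊙ q ⊆ H^ι`. -/
def combo {H ι : Type*} (D : HyperfieldData H) (a b : H) (p q : ι → H) : Set (ι → H) :=
  {r | ∀ i, r i ∈ D.hadd (D.mul a (p i)) (D.mul b (q i))}

/-- A convex subset of `H^ι`. -/
def IsConvexSet {H ι : Type*} (D : HyperfieldData H) (P : Set H) (S : Set (ι → H)) : Prop :=
  ∀ p ∈ S, ∀ q ∈ S, ∀ a ∈ P, ∀ b ∈ P, D.one ∈ D.hadd a b → combo D a b p q ⊆ S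

/-- A conic subset of `H^ι`. -/
def IsConicSet {H ι : Type*} (D : HyperfieldData H) (P : Set H) (S : Set (ι → H)) : Prop :=
  ∀ p ∈ S, ∀ q ∈ S, ∀ a ∈ P, ∀ b ∈ P, combo D a b p q ⊆ S

/-- Membership in the convex hull of `T`: `q` lies in some finite convex
combination of points of `T` (repetition allowed). -/
def InConv {H ι : Type*} (D : HyperfieldData H) (P : Set H) (T : Set (ι → H))
    (q : ι → H) : Prop :=
  ∃ l : List (H × (ι → H)), l ≠ [] ∧ (∀ x ∈ l, x.1 ∈ P ∧ x.2 ∈ T) ∧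
    D.one ∈ listSum D (l.map Prod.fst) ∧
    ∀ i, q i ∈ listSum D (l.map fun x => D.mul x.1 (x.2 i))

/-- Membership in the conic hull of `T`. -/
def InCone {H ι : Type*} (D : HyperfieldData H) (P : Set H) (T : Set (ι → H))
    (q : ι → H) : Prop :=
  ∃ l : List (H × (ι → H)), l ≠ [] ∧ (∀ x ∈ l, x.1 ∈ P ∧ x.2 ∈ T) ∧
    ∀ i, q i ∈ listSum D (l.map fun x => D.mul x.1 (x.2 i))

/-- The setoid on `F` whose classes are the cosets of the multiplicative
subgroup `U ⊆ Fˣ`. -/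
def factorSetoid {F : Type*} [Field F] (U : Subgroup Fˣ) : Setoid F where
  r a b := ∃ u : Fˣ, u ∈ U ∧ b = a * u
  iseqv := ⟨fun a => ⟨1, U.one_mem, by simp⟩,
    fun {a b} h => by
      obtain ⟨u, hu, rfl⟩ := h
      exact ⟨u⁻¹, U.inv_mem hu, by rw [mul_assoc]; simp⟩,
    fun {a b c} h1 h2 => by
      obtain ⟨u, hu, rfl⟩ := h1
      obtain ⟨v, hv, rfl⟩ := h2
      exact ⟨u * v, U.mul_mem hu hv, by rw [Units.val_mul, mul_assoc]⟩⟩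

/-- The underlying set of the factor hyperfield `F/U`. -/
abbrev FQuot {F : Type*} [Field F] (U : Subgroup Fˣ) := Quotient (factorSetoid U)

/-- The quotient map `τ : F → F/U`. -/
def tauF {F : Type*} [Field F] (U : Subgroup Fˣ) : F → FQuot U :=
  Quotient.mk (factorSetoid U)

/-- The hyperfield data of the factor hyperfield `F/U`. -/
noncomputable def factorData {F : Type*} [Field F] (U : Subgroup Fˣ) :
    HyperfieldData (FQuot U) where
  hadd x y := {z | ∃ a b : F, tauF U a = x ∧ tauF U b = y ∧ tauF U (a + b) = z}
  mul x y := tauF U (Quotient.out x * Quotient.out y)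
  neg x := tauF U (-(Quotient.out x))
  zero := tauF U 0
  one := tauF U 1

/-! A convex combination in `F/U` lifts to `F`: choose representatives `aⱼ > 0` of the weights
(positive because `U ⊆ F⁺`) and `bⱼ` of the summands `aⱼ ⊙ pⱼ`; the points `bⱼ / aⱼ ∈ F^d` lie
over the `pⱼ`, and since `∑ aⱼ ∈ U`, their centre of mass with weights `aⱼ` lies over `q`.
Carathéodory's theorem over the ordered field `F` rewrites that point as a positive convex
combination of at most `d + 1` of the lifted points, and applying `τ` to this combination gives
the required combination in `F/U`. -/

namespace FactorHyperfield

section Field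

variable {F : Type*} [Field F] (U : Subgroup Fˣ)

theorem tauF_eq_tauF_iff {a b : F} : tauF U a = tauF U b ↔ ∃ u : Fˣ, u ∈ U ∧ b = a * u :=
  Quotient.eq (r := factorSetoid U)

theorem tauF_mul_unit (a : F) {u : Fˣ} (hu : u ∈ U) : tauF U (a * u) = tauF U a :=
  ((tauF_eq_tauF_iff U).2 ⟨u, hu, rfl⟩).symm

theorem tauF_out (x : FQuot U) : tauF U x.out = x := Quotient.out_eq x

theorem factorData_mul_tauF (a b : F) :
    (factorData U).mul (tauF U a) (tauF U b) = tauF U (a * b) := by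
  obtain ⟨u, hu, hau⟩ := (tauF_eq_tauF_iff U).1 (tauF_out U (tauF U a)).symm
  obtain ⟨v, hv, hbv⟩ := (tauF_eq_tauF_iff U).1 (tauF_out U (tauF U b)).symm
  change tauF U ((tauF U a).out * (tauF U b).out) = _
  rw [hau, hbv, show a * u * (b * v) = a * b * (u * v : Fˣ) by push_cast; ring,
    tauF_mul_unit U _ (U.mul_mem hu hv)]

theorem tauF_div_of_tauF_eq_mul {a b : F} {x : FQuot U} (ha : a ≠ 0)
    (hb : tauF U b = (factorData U).mul (tauF U a) x) : tauF U (b / a) = x := by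
  rw [← tauF_out U x, factorData_mul_tauF] at hb
  obtain ⟨u, hu, hbu⟩ := (tauF_eq_tauF_iff U).1 hb
  rw [← tauF_out U x, ← tauF_mul_unit U (b / a) hu, div_mul_eq_mul_div, ← hbu,
    mul_div_cancel_left₀ _ ha]

theorem tauF_inv_mul_of_tauF_eq_one {s : F} (hs : tauF U s = tauF U 1) (y : F) :
    tauF U (s⁻¹ * y) = tauF U y := by
  obtain ⟨u, hu, rfl⟩ := (tauF_eq_tauF_iff U).1 hs.symm
  rw [one_mul, mul_comm, ← Units.val_inv_eq_inv_val, tauF_mul_unit U _ (U.inv_mem hu)]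

theorem tauF_sum_mem_listSum (A : List F) :
    tauF U A.sum ∈ listSum (factorData U) (A.map (tauF U)) := by
  induction A with
  | nil => exact rfl
  | cons a A ih =>
    exact Set.mem_biUnion ih ⟨a, A.sum, rfl, rfl, rfl⟩

theorem exists_lift_of_mem_listSum {α : Type*} {l : List α} (g : α → FQuot U) {z : FQuot U}
    (hz : z ∈ listSum (factorData U) (l.map g)) :
    ∃ f : Fin l.length → F, (∀ j, tauF U (f j) = g l[j]) ∧ tauF U (∑ j, f j) = z := by
  induction l generalizing z with
  | nil =>
    exact ⟨Fin.elim0, Fin.rec0, by simp [Set.mem_singleton_iff.1 hz, factorData]⟩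
  | cons x l ih =>
    obtain ⟨s, hs, a, b, hax, hbs, rfl⟩ := Set.mem_iUnion₂.1 hz
    obtain ⟨f, hf, hfs⟩ := ih hs
    obtain ⟨u, hu, rfl⟩ := (tauF_eq_tauF_iff U).1 (hfs.trans hbs.symm)
    refine ⟨Fin.cons a fun j => f j * u, Fin.cases hax fun j => ?_, ?_⟩
    · simp [Fin.sum_univ_succ, Finset.sum_mul]
    · simpa [tauF_mul_unit U _ hu] using hf j

end Field

section Ordered

variable {F : Type*} [Field F] [LinearOrder F] [IsStrictOrderedRing F] (U : Subgroup Fˣ)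
  {ι : Type*}

theorem tauF_mem_image_pos_iff (hU : ∀ u : Fˣ, u ∈ U → (0 : F) < (u : F)) {a : F} :
    tauF U a ∈ tauF U '' {x : F | 0 < x} ↔ 0 < a := by
  refine ⟨?_, fun ha => ⟨a, ha, rfl⟩⟩
  rintro ⟨b, hb, hba⟩
  obtain ⟨u, hu, rfl⟩ := (tauF_eq_tauF_iff U).1 hba
  exact mul_pos hb (hU u hu)

theorem exists_lift_mem_convexHull_of_inConv (hU : ∀ u : Fˣ, u ∈ U → (0 : F) < (u : F))
    {T : Set (ι → FQuot U)} {q : ι → FQuot U}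
    (hq : InConv (factorData U) (tauF U '' {x : F | 0 < x}) T q) :
    ∃ r : ι → F, tauF U ∘ r = q ∧ r ∈ convexHull F {p | tauF U ∘ p ∈ T} := by
  obtain ⟨l, hl, hlT, hone, hq⟩ := hq
  obtain ⟨a, ha, hsum⟩ := exists_lift_of_mem_listSum U Prod.fst hone
  choose b hb hbsum using fun i => exists_lift_of_mem_listSum U _ (hq i)
  have ha_pos : ∀ j, 0 < a j := fun j =>
    (tauF_mem_image_pos_iff U hU).1 (ha j ▸ (hlT _ (List.getElem_mem _)).1)
  have hne : (Finset.univ : Finset (Fin l.length)).Nonempty :=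
    Finset.univ_nonempty_iff.2 ⟨⟨0, List.length_pos_iff.2 hl⟩⟩
  set p : Fin l.length → ι → F := fun j i => b i j / a j
  have hp : ∀ j, tauF U ∘ p j = l[j].2 := fun j =>
    funext fun i => tauF_div_of_tauF_eq_mul U (ha_pos j).ne' (by rw [hb, ha])
  refine ⟨Finset.univ.centerMass a p, funext fun i => ?_,
    Finset.univ.centerMass_mem_convexHull (fun j _ => (ha_pos j).le)
      (Finset.sum_pos (fun j _ => ha_pos j) hne) fun j _ => ?_⟩
  · have hcomb : Finset.univ.centerMass a p i = (∑ j, a j)⁻¹ * ∑ j, b i j := by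
      simp only [Finset.centerMass, Pi.smul_apply, Finset.sum_apply, smul_eq_mul, p,
        mul_div_cancel₀ _ (ha_pos _).ne']
    rw [Function.comp_apply, hcomb, tauF_inv_mul_of_tauF_eq_one U hsum, hbsum]
  · rw [Set.mem_ofPred_eq, hp]
    exact (hlT _ (List.getElem_mem _)).2

theorem exists_short_combination_of_mem_convexHull [Fintype ι] {S : Set (ι → F)} {r : ι → F}
    (hr : r ∈ convexHull F S) :
    ∃ l : List (FQuot U × (ι → FQuot U)), l.length ≤ Fintype.card ι + 1 ∧ l ≠ [] ∧
      (∀ x ∈ l, x.1 ∈ tauF U '' {x : F | 0 < x} ∧ x.2 ∈ (tauF U ∘ ·) '' S) ∧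
      (factorData U).one ∈ listSum (factorData U) (l.map Prod.fst) ∧
      ∀ i, tauF U (r i) ∈ listSum (factorData U)
        (l.map fun x => (factorData U).mul x.1 (x.2 i)) := by
  obtain ⟨κ, _, z, w, hzS, hz, hw, hw1, hwz⟩ := eq_pos_convex_span_of_mem_convexHull hr
  have hcard : Fintype.card κ ≤ Fintype.card ι + 1 :=
    calc Fintype.card κ ≤ Module.finrank F (vectorSpan F (Set.range z)) + 1 :=
          hz.card_le_finrank_succ
      _ ≤ Module.finrank F (ι → F) + 1 := by gcongr; exact Submodule.finrank_le _
      _ = Fintype.card ι + 1 := by rw [Module.finrank_fintype_fun_eq_card]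
  have hne : (Finset.univ : Finset κ).Nonempty :=
    Finset.nonempty_of_sum_ne_zero (hw1 ▸ one_ne_zero)
  have hsum (f : κ → F) : tauF U (∑ k, f k) ∈
      listSum (factorData U) ((Finset.univ.toList.map f).map (tauF U)) := by
    simpa only [Finset.sum_map_toList] using tauF_sum_mem_listSum U (Finset.univ.toList.map f)
  refine ⟨Finset.univ.toList.map fun k => (tauF U (w k), tauF U ∘ z k), by simpa using hcard,
    by simpa using hne.ne_empty, ?_, ?_, fun i => ?_⟩
  · simp only [List.mem_map, Finset.mem_toList, Finset.mem_univ, true_and]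
    rintro _ ⟨k, rfl⟩
    exact ⟨⟨w k, hw k, rfl⟩, z k, hzS ⟨k, rfl⟩, rfl⟩
  · have h1 := hsum w
    rw [hw1, List.map_map] at h1
    rwa [List.map_map]
  · simpa [← hwz, List.map_map, Function.comp_def, factorData_mul_tauF] using
      hsum fun k => w k * z k i

end Ordered

end FactorHyperfield

/-- Carathéodory's theorem for ordered factor hyperfields: any
point of `conv(T) ⊆ H^d` lies in a convex combination of at most `d + 1`
points of `T`. -/
theorem stmt17 {F : Type*} [Field F] [LinearOrder F] [IsStrictOrderedRing F] (U : Subgroup Fˣ)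
    (hU : ∀ u : Fˣ, u ∈ U → (0 : F) < (u : F)) {d : ℕ}
    (T : Set (Fin d → FQuot U)) (q : Fin d → FQuot U)
    (hq : InConv (factorData U) (tauF U '' {x : F | 0 < x}) T q) :
    ∃ l : List (FQuot U × (Fin d → FQuot U)), l.length ≤ d + 1 ∧ l ≠ [] ∧
      (∀ x ∈ l, x.1 ∈ tauF U '' {x : F | 0 < x} ∧ x.2 ∈ T) ∧
      (factorData U).one ∈ listSum (factorData U) (l.map Prod.fst) ∧
      ∀ i, q i ∈ listSum (factorData U)
        (l.map fun x => (factorData U).mul x.1 (x.2 i)) := by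
  obtain ⟨r, rfl, hr⟩ := FactorHyperfield.exists_lift_mem_convexHull_of_inConv U hU hq
  obtain ⟨l, hlen, hl, hlT, hone, hq⟩ := FactorHyperfield.exists_short_combination_of_mem_convexHull U hr
  refine ⟨l, by simpa using hlen, hl, fun x hx => ⟨(hlT x hx).1, ?_⟩, hone, hq⟩
  obtain ⟨p, hp, hpx⟩ := (hlT x hx).2
  exact hpx ▸ hp
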